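/- Let S be an axis-aligned square with center q and let α be a real with 0 < α < 2π. For every closed angular sector Q with apex q and angle 2π − α, there exists a tile of Tiling(index(α)) of S that is disjoint from Q. -/

import Mathlib

/-!
The directions missed by the sector form an arc of angle `α` bisected by `a + α / 2`. The point
`c` at distance `x / 4` from `q` in that direction lies in the square, and projecting onto the
bisector shows that every point of the sector is at distance at least
`(x / 8) (1 - cos (α / 2)) ≥ x α² / (16 π²)` from `c`. Since `2 ^ index α * α² ≥ (16 π)²`, the
tile containing `c`, of diameter `√2 x / 2 ^ index α`, cannot reach the sector.
-/

open Real

noncomputable section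

/-- Points of the Euclidean plane. -/
abbrev Pt := EuclideanSpace ℝ (Fin 2)

/-- The unit vector in direction angle `a`. -/
def unitDir (a : ℝ) : Pt := !₂[Real.cos a, Real.sin a]

/-- The closed angular sector with apex `p`, swept clockwise from the half-line in
direction angle `a` through angle `θ` (it consists of the points lying on the half-lines
from `p` in the direction angles `a - t` for `0 ≤ t ≤ θ`, including both bounding
half-lines). -/
def sector (p : Pt) (a θ : ℝ) : Set Pt :=
  {q | ∃ r : ℝ, 0 ≤ r ∧ ∃ t : ℝ, 0 ≤ t ∧ t ≤ θ ∧ q = p + r • unitDir (a - t)}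

/-- The axis-aligned square with center `q` and side length `x`. -/
def square (q : Pt) (x : ℝ) : Set Pt :=
  {y | y 0 ∈ Set.Icc (q 0 - x / 2) (q 0 + x / 2) ∧ y 1 ∈ Set.Icc (q 1 - x / 2) (q 1 + x / 2)}

/-- The tile in position `(a, b)` of `Tiling(m)` of the square with center `q` and side
length `x`: the `(a, b)`-th of the `4^m` closed congruent subsquares of side `x / 2^m`
arranged in a `2^m × 2^m` grid. -/
def tile (q : Pt) (x : ℝ) (m : ℕ) (a b : ℕ) : Set Pt :=
  {y | y 0 ∈ Set.Icc (q 0 - x / 2 + a * (x / 2 ^ m)) (q 0 - x / 2 + (a + 1) * (x / 2 ^ m)) ∧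
       y 1 ∈ Set.Icc (q 1 - x / 2 + b * (x / 2 ^ m)) (q 1 - x / 2 + (b + 1) * (x / 2 ^ m))}

/-- `t` is a tile of `Tiling(m)` of the square with center `q` and side length `x`. -/
def IsTile (q : Pt) (x : ℝ) (m : ℕ) (t : Set Pt) : Prop :=
  ∃ a b : ℕ, a < 2 ^ m ∧ b < 2 ^ m ∧ t = tile q x m a b

/-- The `k`-th piece of `Slicing(i)` of the square with center `q` and side length `x`:
the part of the square lying in the angular sector bounded by the half-lines from `q` at
direction angles `2πk/2^i` and `2π(k+1)/2^i` (for `i ≥ 3` this piece is a triangle). -/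
def slicePiece (q : Pt) (x : ℝ) (i k : ℕ) : Set Pt :=
  {y | ∃ r : ℝ, 0 ≤ r ∧ ∃ θ : ℝ, 2 * π * k / 2 ^ i ≤ θ ∧ θ ≤ 2 * π * (k + 1) / 2 ^ i ∧
    y = q + r • unitDir θ} ∩ square q x

/-- `T` is a triangle of `Slicing(i)` of the square with center `q` and side length `x`. -/
def IsSliceTriangle (q : Pt) (x : ℝ) (i : ℕ) (T : Set Pt) : Prop :=
  ∃ k : ℕ, k < 2 ^ i ∧ T = slicePiece q x i k

/-- The vertex of `Slicing(i)` on the boundary of the square of side 2 centered at the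
origin: the intersection of the `k`-th slicing half-line with the boundary of the square. -/
def sliceVertex (i k : ℕ) : Pt :=
  (max |Real.cos (2 * π * k / 2 ^ i)| |Real.sin (2 * π * k / 2 ^ i)|)⁻¹ •
    unitDir (2 * π * k / 2 ^ i)

/-- The set of side lengths of the triangles of `Slicing(i)` of the square of side 2
centered at the origin (the triangle `k` has vertices `0`, `sliceVertex i k` and
`sliceVertex i (k+1)`); the ratios of side lengths are independent of the size of the
square. -/
def sideLengths (i : ℕ) : Set ℝ :=
  ⋃ k ∈ Set.Iio (2 ^ i), {‖sliceVertex i k‖, dist (sliceVertex i k) (sliceVertex i (k + 1))}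

/-- `ρ i`: the maximum of `⌈a/b⌉` over all side lengths `a`, `b` of triangles of
`Slicing(i)` of a square. -/
def rho (i : ℕ) : ℕ :=
  sSup {n : ℕ | ∃ a ∈ sideLengths i, ∃ b ∈ sideLengths i, n = ⌈a / b⌉₊}

/-- `φ(i) = i · ρ i`. -/
def phi (i : ℕ) : ℕ := i * rho i

/-- `index(α) = 4 · φ(max(3, ⌈log₂(2π/α)⌉ + 1))`. -/
def index (α : ℝ) : ℕ := 4 * phi (max 3 (⌈Real.logb 2 (2 * π / α)⌉ + 1)).toNat

@[simp]
lemma unitDir_apply_zero (θ : ℝ) : unitDir θ 0 = cos θ := rfl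

@[simp]
lemma unitDir_apply_one (θ : ℝ) : unitDir θ 1 = sin θ := rfl

lemma inner_unitDir (θ φ : ℝ) : inner ℝ (unitDir θ) (unitDir φ) = cos (θ - φ) := by
  rw [cos_sub]
  simp only [PiLp.inner_apply, RCLike.inner_apply, conj_trivial, Fin.sum_univ_two,
    unitDir_apply_zero, unitDir_apply_one]
  ring

@[simp]
lemma norm_unitDir (θ : ℝ) : ‖unitDir θ‖ = 1 := by
  have h := real_inner_self_eq_norm_sq (unitDir θ)
  rw [inner_unitDir, sub_self, cos_zero] at h
  nlinarith [norm_nonneg (unitDir θ)]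

lemma cos_le_cos_of_le_of_le_two_pi_sub {θ φ : ℝ} (hθ : 0 ≤ θ) (hθφ : θ ≤ φ)
    (hφ : φ ≤ 2 * π - θ) : cos φ ≤ cos θ := by
  rcases le_total φ π with h | h
  · exact cos_le_cos_of_nonneg_of_le_pi hθ h hθφ
  · rw [← cos_two_pi_sub φ]
    exact cos_le_cos_of_nonneg_of_le_pi hθ (by linarith) (by linarith)

lemma mul_one_sub_cos_le_two_mul_dist {q p : Pt} {a α R : ℝ} (hα : 0 ≤ α) (hR : 0 ≤ R)
    (hp : p ∈ sector q a (2 * π - α)) :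
    R * (1 - cos (α / 2)) ≤ 2 * dist p (q + R • unitDir (a + α / 2)) := by
  obtain ⟨r, hr, t, ht0, ht, rfl⟩ := hp
  set u := unitDir (a + α / 2)
  set v := r • unitDir (a - t)
  set δ := dist (q + v) (q + R • u)
  have hdiff : q + v - (q + R • u) = v - R • u := add_sub_add_left_eq_sub _ _ _
  have hcos : cos (t + α / 2) ≤ cos (α / 2) :=
    cos_le_cos_of_le_of_le_two_pi_sub (by linarith) (by linarith) (by linarith)
  have hfar : R - δ ≤ r * cos (t + α / 2) := by
    have h := abs_real_inner_le_norm (q + v - (q + R • u)) u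
    rw [norm_unitDir, mul_one, ← dist_eq_norm, abs_le, hdiff, inner_sub_left,
      real_inner_smul_left, real_inner_smul_left, inner_unitDir, inner_unitDir, sub_self,
      cos_zero, ← cos_neg] at h
    ring_nf at h ⊢
    linarith
  have hnear : r ≤ R + δ := by
    have h := norm_add_le (v - R • u) (R • u)
    rwa [sub_add_cancel, ← hdiff, ← dist_eq_norm, norm_smul, norm_smul, norm_unitDir,
      norm_unitDir, Real.norm_of_nonneg hr, Real.norm_of_nonneg hR, mul_one, mul_one,
      add_comm] at h
  have hδ : 0 ≤ δ := dist_nonneg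
  have hr_cos := mul_le_mul_of_nonneg_left hcos hr
  rcases le_total 0 (cos (α / 2)) with hc | hc
  · nlinarith [mul_le_mul_of_nonneg_right hnear hc,
      mul_nonneg hδ (sub_nonneg.2 (cos_le_one (α / 2)))]
  · nlinarith [mul_nonpos_of_nonneg_of_nonpos hr hc, neg_one_le_cos (α / 2)]

lemma exists_lt_mem_Icc_add_mul {lo x y : ℝ} {n : ℕ} (hx : 0 < x) (hn : 0 < n)
    (hy : y ∈ Set.Icc lo (lo + x)) :
    ∃ k < n, y ∈ Set.Icc (lo + k * (x / n)) (lo + (k + 1) * (x / n)) := by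
  have hs : 0 < x / n := by positivity
  set u := (y - lo) / (x / n)
  have hu0 : 0 ≤ u := div_nonneg (by linarith [hy.1]) hs.le
  have hun : u ≤ n := by
    rw [div_le_iff₀ hs, mul_div_cancel₀ _ (by positivity)]
    linarith [hy.2]
  -- the `min` only matters at `y = lo + x`, where the floor is `n`
  refine ⟨min ⌊u⌋₊ (n - 1), by omega, ?_⟩
  have hy_eq : y = lo + u * (x / n) := by simp only [u]; field_simp; ring
  rw [hy_eq]
  constructor
  · gcongr
    exact (Nat.cast_le.2 (min_le_left _ _)).trans (Nat.floor_le hu0)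
  · gcongr
    rcases le_total ⌊u⌋₊ (n - 1) with h | h
    · rw [min_eq_left h]
      exact (Nat.lt_floor_add_one u).le
    · rw [min_eq_right h, Nat.cast_sub hn, Nat.cast_one, sub_add_cancel]
      exact hun

lemma exists_isTile_mem {q c : Pt} {x : ℝ} (hx : 0 < x) (m : ℕ) (hc : c ∈ square q x) :
    ∃ t, IsTile q x m t ∧ c ∈ t := by
  have hcell : ∀ i, c i ∈ Set.Icc (q i - x / 2) (q i + x / 2) → ∃ k : ℕ, k < 2 ^ m ∧
      c i ∈ Set.Icc (q i - x / 2 + k * (x / 2 ^ m)) (q i - x / 2 + (k + 1) * (x / 2 ^ m)) := by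
    intro i hi
    rw [show q i + x / 2 = q i - x / 2 + x by ring] at hi
    simpa using exists_lt_mem_Icc_add_mul (n := 2 ^ m) hx (by positivity) hi
  obtain ⟨a, ha, ha'⟩ := hcell 0 hc.1
  obtain ⟨b, hb, hb'⟩ := hcell 1 hc.2
  exact ⟨_, ⟨a, b, ha, hb, rfl⟩, ha', hb'⟩

lemma dist_le_of_mem_tile {q p c : Pt} {x : ℝ} {m a b : ℕ} (hp : p ∈ tile q x m a b)
    (hc : c ∈ tile q x m a b) : dist p c ≤ √2 * (x / 2 ^ m) := by
  set s := x / 2 ^ m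
  have hcoord : ∀ {lo k y z : ℝ}, y ∈ Set.Icc (lo + k * s) (lo + (k + 1) * s) →
      z ∈ Set.Icc (lo + k * s) (lo + (k + 1) * s) → dist y z ^ 2 ≤ s ^ 2 := by
    intro lo k y z hy hz
    rw [Real.dist_eq, sq_abs]
    nlinarith [hy.1, hy.2, hz.1, hz.2]
  have hs : 0 ≤ s := by linarith [hp.1.1.trans hp.1.2]
  rw [EuclideanSpace.dist_eq, Fin.sum_univ_two, ← Real.sqrt_sq hs, ← Real.sqrt_mul zero_le_two]
  gcongr
  linarith [hcoord hp.1 hc.1, hcoord hp.2 hc.2]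

lemma sideLengths_finite (i : ℕ) : (sideLengths i).Finite :=
  (Set.finite_Iio _).biUnion fun _ _ => (Set.finite_singleton _).insert _

lemma one_le_rho (i : ℕ) : 1 ≤ rho i := by
  have hv : ‖sliceVertex i 0‖ = 1 := by simp [sliceVertex]
  have hmem : ‖sliceVertex i 0‖ ∈ sideLengths i :=
    Set.mem_biUnion (show 0 ∈ Set.Iio (2 ^ i) from Set.mem_Iio.2 (by positivity))
      (Set.mem_insert _ _)
  have hfin : {n : ℕ | ∃ a ∈ sideLengths i, ∃ b ∈ sideLengths i, n = ⌈a / b⌉₊}.Finite := by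
    refine ((sideLengths_finite i).image2 (fun a b => ⌈a / b⌉₊) (sideLengths_finite i)).subset ?_
    rintro n ⟨a, ha, b, hb, rfl⟩
    exact Set.mem_image2_of_mem ha hb
  exact le_csSup hfin.bddAbove ⟨_, hmem, _, hmem, by rw [hv]; norm_num⟩

def indexLevel (α : ℝ) : ℕ := (max 3 (⌈Real.logb 2 (2 * π / α)⌉ + 1)).toNat

lemma four_mul_indexLevel_le_index (α : ℝ) : 4 * indexLevel α ≤ index α :=
  Nat.mul_le_mul_left 4 (Nat.le_mul_of_pos_right _ (one_le_rho _))

lemma le_indexLevel (α : ℝ) : max 3 (⌈Real.logb 2 (2 * π / α)⌉ + 1) ≤ (indexLevel α : ℤ) :=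
  Int.self_le_toNat _

lemma two_pi_div_le_two_pow_indexLevel {α : ℝ} (hα : 0 < α) :
    2 * π / α ≤ 2 ^ indexLevel α := by
  have hceil : ⌈Real.logb 2 (2 * π / α)⌉ ≤ (indexLevel α : ℤ) := by
    have := le_indexLevel α; omega
  have hlog : Real.logb 2 (2 * π / α) ≤ indexLevel α :=
    (Int.le_ceil _).trans (by exact_mod_cast hceil)
  rwa [Real.logb_le_iff_le_rpow one_lt_two (by positivity), Real.rpow_natCast] at hlog

lemma sixteen_pi_sq_le_two_pow_index_mul_sq {α : ℝ} (hα : 0 < α) :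
    (16 * π) ^ 2 ≤ 2 ^ index α * α ^ 2 := by
  set i := indexLevel α
  have hi : 3 ≤ i := by have := le_indexLevel α; omega
  have h8 : (8 : ℝ) ≤ 2 ^ i := by
    calc (8 : ℝ) = 2 ^ 3 := by norm_num
      _ ≤ 2 ^ i := pow_le_pow_right₀ one_le_two hi
  have h2π : 2 * π ≤ 2 ^ i * α := by
    have := two_pi_div_le_two_pow_indexLevel hα
    rwa [div_le_iff₀ hα] at this
  have h16π : 16 * π ≤ 2 ^ i * (2 ^ i * α) := by
    calc 16 * π = 8 * (2 * π) := by ring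
      _ ≤ 2 ^ i * (2 ^ i * α) := mul_le_mul h8 h2π (by positivity) (by positivity)
  calc (16 * π) ^ 2 ≤ (2 ^ i * (2 ^ i * α)) ^ 2 := pow_le_pow_left₀ (by positivity) h16π 2
    _ = 2 ^ (4 * i) * α ^ 2 := by ring
    _ ≤ 2 ^ index α * α ^ 2 := by
      gcongr
      · exact one_le_two
      · exact four_mul_indexLevel_le_index α

lemma add_smul_unitDir_mem_square (q : Pt) {x R : ℝ} (hR : |R| ≤ x / 2) (θ : ℝ) :
    q + R • unitDir θ ∈ square q x := by
  have hcoord : ∀ s : ℝ, |s| ≤ 1 → |R * s| ≤ x / 2 := fun s hs =>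
    (abs_mul R s).trans_le ((mul_le_of_le_one_right (abs_nonneg R) hs).trans hR)
  have h0 := abs_le.1 (hcoord _ (abs_cos_le_one θ))
  have h1 := abs_le.1 (hcoord _ (abs_sin_le_one θ))
  simp only [square, Set.mem_ofPred_eq, Set.mem_Icc, PiLp.add_apply, PiLp.smul_apply,
    unitDir_apply_zero, unitDir_apply_one, smul_eq_mul]
  constructor <;> constructor <;> linarith

/-- For every `α ∈ (0, 2π)` and every closed angular sector `Q` of angle `2π − α` with
apex at the center `q` of an axis-aligned square `S`, some tile of `Tiling(index(α))` of
`S` is disjoint from `Q`. -/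
theorem exists_tile_disjoint_from_sector (q : Pt) (x : ℝ) (hx : 0 < x)
    (α : ℝ) (hα : 0 < α) (hα2 : α < 2 * π) (a : ℝ) :
    ∃ t : Set Pt, IsTile q x (index α) t ∧ t ∩ sector q a (2 * π - α) = ∅ := by
  have hR : |x / 4| ≤ x / 2 := by rw [abs_of_pos (by positivity)]; linarith
  obtain ⟨t, ⟨i, j, hi, hj, rfl⟩, hct⟩ :=
    exists_isTile_mem hx (index α) (add_smul_unitDir_mem_square q hR (a + α / 2))
  refine ⟨_, ⟨i, j, hi, hj, rfl⟩, Set.eq_empty_of_forall_notMem ?_⟩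
  rintro p ⟨hpt, hpQ⟩
  set ε := x / 2 ^ index α
  have hε : 0 < ε := by positivity
  have hfar := mul_one_sub_cos_le_two_mul_dist hα.le (by positivity : 0 ≤ x / 4) hpQ
  have hnear := dist_le_of_mem_tile hpt hct
  have hcos : cos (α / 2) ≤ 1 - 2 / π ^ 2 * (α / 2) ^ 2 :=
    cos_le_one_sub_mul_cos_sq (by rw [abs_of_pos (by positivity)]; linarith)
  have hindex : (16 * π) ^ 2 * ε ≤ x * α ^ 2 := by
    have := mul_le_mul_of_nonneg_right (sixteen_pi_sq_le_two_pow_index_mul_sq hα) hε.le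
    rwa [mul_right_comm, mul_div_cancel₀ _ (by positivity)] at this
  have hgap : x * α ^ 2 / (8 * π ^ 2) ≤ 2 * (√2 * ε) :=
    calc x * α ^ 2 / (8 * π ^ 2) = x / 4 * (2 / π ^ 2 * (α / 2) ^ 2) := by field_simp; ring
      _ ≤ x / 4 * (1 - cos (α / 2)) := by gcongr; linarith
      _ ≤ 2 * dist p _ := hfar
      _ ≤ 2 * (√2 * ε) := by gcongr
  rw [div_le_iff₀ (by positivity)] at hgap
  have hsqrt : √2 < 2 := sqrt_two_lt_three_halves.trans (by norm_num)
  nlinarith [mul_lt_mul_of_pos_right hsqrt (by positivity : 0 < π ^ 2 * ε)]
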